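/- Let B be a C*-algebra and let (Bₙ) be an exhaustive sequence of C*-subalgebras of B. Then for every partial isometry v ∈ B and every ε > 0 there exist n and a partial isometry w ∈ Bₙ with ‖v − w‖ < ε. -/

import Mathlib

set_option maxHeartbeats 2000000

open scoped ContinuousMapZero

/-- Auxiliary: `cfcₙHom` of a selfadjoint element of a closed non-unital star subalgebra
stays in the subalgebra. -/
lemma cfcnhom_mem {B : Type*} [NonUnitalCStarAlgebra B]
    (S : NonUnitalStarSubalgebra ℂ B) (hScl : IsClosed (S : Set B))
    {a : B} (ha : IsSelfAdjoint a) (haS : a ∈ S)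
    (g : C(quasispectrum ℝ a, ℝ)₀) : cfcₙHom (R := ℝ) ha g ∈ S := by
  have hcs := NonUnitalContinuousFunctionalCalculus.compactSpace_quasispectrum
    (R := ℝ) (p := IsSelfAdjoint) a
  have h0 : ((0 : quasispectrum ℝ a) : ℝ) = 0 := rfl
  induction g using ContinuousMapZero.induction_on_of_compact with
  | zero => rw [map_zero]; exact S.zero_mem
  | id =>
      have hid : (ContinuousMapZero.id (quasispectrum ℝ a)) =
          (⟨(ContinuousMap.id ℝ).restrict <| quasispectrum ℝ a, rfl⟩ :
            C(quasispectrum ℝ a, ℝ)₀) := rfl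
      rw [cfcₙHom_id (R := ℝ) ha]; exact haS
  | star_id =>
      have hid : (ContinuousMapZero.id (quasispectrum ℝ a)) =
          (⟨(ContinuousMap.id ℝ).restrict <| quasispectrum ℝ a, rfl⟩ :
            C(quasispectrum ℝ a, ℝ)₀) := rfl
      rw [map_star, cfcₙHom_id (R := ℝ) ha]; exact star_mem haS
  | add f g hf hg => rw [map_add]; exact S.add_mem hf hg
  | mul f g hf hg => rw [map_mul]; exact S.mul_mem hf hg
  | smul r f hf =>
      rw [map_smul]
      have : r • cfcₙHom (R := ℝ) ha f = (r : ℂ) • cfcₙHom (R := ℝ) ha f := by simp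
      rw [this]
      exact S.smul_mem _ hf
  | frequently f hf =>
      refine hScl.closure_subset ?_
      rw [mem_closure_iff_frequently]
      exact (cfcₙHom_continuous (R := ℝ) ha).continuousAt.tendsto.frequently hf

lemma cfcn_mem {B : Type*} [NonUnitalCStarAlgebra B]
    (S : NonUnitalStarSubalgebra ℂ B) (hScl : IsClosed (S : Set B))
    {a : B} (ha : IsSelfAdjoint a) (haS : a ∈ S) (f : ℝ → ℝ)
    (hf : ContinuousOn f (quasispectrum ℝ a)) (hf0 : f 0 = 0) :
    cfcₙ f a ∈ S := by
  rw [cfcₙ_apply f a hf hf0 ha]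
  exact cfcnhom_mem S hScl ha haS _



/-- An exhaustive sequence of C*-subalgebras of `B`. -/
def IsExhaustive {B : Type*} [NonUnitalCStarAlgebra B]
    (S : ℕ → NonUnitalStarSubalgebra ℂ B) : Prop :=
  ∀ (F : Finset B) (m : ℕ) (ε : ℝ), 0 < ε →
    ∃ n > m, ∀ x ∈ F, ∃ y ∈ S n, ‖x - y‖ ≤ ε

/-- if `(Bₙ)` is an exhaustive sequence of (closed) C*-subalgebras of `B`, then
every partial isometry `v ∈ B` can be approximated within any `ε > 0` by a partial
isometry lying in some `Bₙ`. -/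
theorem partialIsometry_approximation {B : Type*} [NonUnitalCStarAlgebra B]
    (S : ℕ → NonUnitalStarSubalgebra ℂ B)
    (hSclosed : ∀ n, IsClosed (S n : Set B))
    (hS : IsExhaustive S)
    (v : B) (hv : v * star v * v = v) (ε : ℝ) (hε : 0 < ε) :
    ∃ n, ∃ w ∈ S n, w * star w * w = w ∧ ‖v - w‖ < ε := by

  set δ : ℝ := min (min (1/300) (ε/3)) (ε^2/144) with hδdef
  have hδpos : 0 < δ := by positivity
  have hδ1 : δ ≤ 1/300 := (min_le_left _ _).trans (min_le_left _ _)
  have hδ2 : δ ≤ ε/3 := (min_le_left _ _).trans (min_le_right _ _)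
  have hδ3 : δ ≤ ε^2/144 := min_le_right _ _
  obtain ⟨n, -, hx⟩ := hS {v} 0 δ hδpos
  obtain ⟨x, hxS, hxv⟩ := hx v (Finset.mem_singleton_self v)
  -- hxv : ‖v - x‖ ≤ δ
  -- basic norm facts
  have hv' : v * (star v * v) = v := by rw [← mul_assoc]; exact hv
  have hp : (star v * v) * (star v * v) = star v * v := by
    rw [mul_assoc (star v) v (star v * v), hv']
  have hpsa : star (star v * v) = star v * v := by simp [star_mul, mul_assoc]
  have hnp : ‖star v * v‖ = ‖v‖ * ‖v‖ := CStarRing.norm_star_mul_self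
  have hnp2 : ‖star v * v‖ * ‖star v * v‖ = ‖star v * v‖ := by
    conv_lhs => rw [← CStarRing.norm_star_mul_self, hpsa, hp]
  have hv1 : ‖v‖ ≤ 1 := by
    rcases mul_eq_zero.mp (show ‖star v * v‖ * (‖star v * v‖ - 1) = 0 by nlinarith) with h | h
    · nlinarith [norm_nonneg v]
    · nlinarith [norm_nonneg v]
  have hxvx : ‖x - v‖ ≤ δ := by rwa [norm_sub_rev] at hxv
  have hxn : ‖x‖ ≤ 1 + δ := by
    calc ‖x‖ = ‖v + (x - v)‖ := by congr 1; abel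
    _ ≤ ‖v‖ + ‖x - v‖ := norm_add_le _ _
    _ ≤ 1 + δ := by linarith
  set a := star x * x with ha_def
  have ha : IsSelfAdjoint a := IsSelfAdjoint.star_mul_self x
  have han : ‖a‖ ≤ 2 := by
    rw [ha_def, CStarRing.norm_star_mul_self]
    nlinarith [norm_nonneg x]
  have hpn : ‖star v * v‖ ≤ 1 := by nlinarith [norm_nonneg v]
  -- ‖a - p‖ ≤ 3δ
  have hap : ‖a - star v * v‖ ≤ 3*δ := by
    have hdecomp : a - star v * v = star x * (x - v) + star (x - v) * v := by
      rw [ha_def]; simp only [mul_sub, sub_mul, star_sub]; abel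
    calc ‖a - star v * v‖ = ‖star x * (x - v) + star (x - v) * v‖ := by rw [hdecomp]
    _ ≤ ‖star x * (x - v)‖ + ‖star (x - v) * v‖ := norm_add_le _ _
    _ ≤ ‖x‖ * ‖x - v‖ + ‖x - v‖ * ‖v‖ := by
        refine add_le_add ((norm_mul_le _ _).trans ?_) ((norm_mul_le _ _).trans ?_) <;>
          rw [norm_star]
    _ ≤ 3*δ := by nlinarith [norm_nonneg (x - v), norm_nonneg x, norm_nonneg v]
  have haa : ‖a*a - (star v * v) * (star v * v)‖ ≤ 9*δ := by
    have hdecomp : a*a - (star v * v) * (star v * v)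
        = a * (a - star v * v) + (a - star v * v) * (star v * v) := by
      simp only [mul_sub, sub_mul]; abel
    calc ‖a*a - (star v * v) * (star v * v)‖
        = ‖a * (a - star v * v) + (a - star v * v) * (star v * v)‖ := by rw [hdecomp]
    _ ≤ ‖a * (a - star v * v)‖ + ‖(a - star v * v) * (star v * v)‖ := norm_add_le _ _
    _ ≤ ‖a‖ * ‖a - star v * v‖ + ‖a - star v * v‖ * ‖star v * v‖ := by
        gcongr <;> exact norm_mul_le _ _
    _ ≤ 9*δ := by nlinarith [norm_nonneg (a - star v * v), norm_nonneg a,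
        norm_nonneg (star v * v)]
  have hη : ‖a - a*a‖ ≤ 12*δ := by
    have hdecomp : a - a*a = (a - star v * v) - (a*a - (star v * v) * (star v * v)) := by
      rw [hp]; abel
    calc ‖a - a*a‖ ≤ ‖a - star v * v‖ + ‖a*a - (star v * v) * (star v * v)‖ := by
          rw [hdecomp]; exact norm_sub_le _ _
    _ ≤ 12*δ := by linarith
  -- spectral bound
  have hpoly : cfcₙ (fun t : ℝ => t - t*t) a = a - a*a := by
    rw [cfcₙ_sub (fun t : ℝ => t) (fun t : ℝ => t*t) a (by fun_prop) (by simp)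
      (by fun_prop) (by simp),
      cfcₙ_mul (fun t : ℝ => t) (fun t : ℝ => t) a (by fun_prop) (by simp)
      (by fun_prop) (by simp), cfcₙ_id' ℝ a]
  have hspec : ∀ t ∈ quasispectrum ℝ a, |t - t*t| ≤ 12*δ := by
    intro t ht
    have h := norm_apply_le_norm_cfcₙ (fun t : ℝ => t - t*t) a ht (by fun_prop) (by simp) ha
    rw [hpoly] at h
    simp only [Real.norm_eq_abs] at h
    linarith
  -- the function
  set f : ℝ → ℝ := fun t => if t < 1/2 then 0 else (Real.sqrt t)⁻¹ with hf_def
  have hf0 : f 0 = 0 := by norm_num [hf_def]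
  have hgap : ∀ t ∈ quasispectrum ℝ a,
      (|t| ≤ 24*δ ∧ f t = 0) ∨
      (3/4 ≤ t ∧ |t - 1| ≤ 24*δ ∧ f t = (Real.sqrt t)⁻¹) := by
    intro t ht
    obtain ⟨hl, hr⟩ := abs_le.mp (hspec t ht)
    by_cases h12 : t < 1/2
    · left
      refine ⟨abs_le.mpr ⟨?_, ?_⟩, by simp only [hf_def]; rw [if_pos h12]⟩
      · nlinarith [sq_nonneg t]
      · nlinarith [sq_nonneg t]
    · right
      push_neg at h12
      have h1 : t - 1 ≤ 24*δ := by nlinarith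
      have h2 : 1 - t ≤ 24*δ := by nlinarith
      refine ⟨by nlinarith [abs_le.mpr ⟨by linarith, h1⟩], abs_le.mpr ⟨by linarith, h1⟩,
        by simp only [hf_def]; rw [if_neg (not_lt.mpr h12)]⟩
  -- continuity of f on the quasispectrum
  have hfc : ContinuousOn f (quasispectrum ℝ a) := by
    intro t ht
    apply ContinuousAt.continuousWithinAt
    rcases hgap t ht with ⟨htb, -⟩ | ⟨ht34, -, -⟩
    · have hlt : t < 1/2 := by
        have := abs_le.mp htb
        linarith [this.2]
      have hev : f =ᶠ[nhds t] fun _ => 0 := by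
        filter_upwards [Iio_mem_nhds hlt] with s hs
        have hs' : s < 1/2 := hs
        simp only [hf_def]
        rw [if_pos hs']
      exact (continuousAt_congr hev).mpr continuousAt_const
    · have hev : f =ᶠ[nhds t] fun s => (Real.sqrt s)⁻¹ := by
        filter_upwards [Ioi_mem_nhds (show (1:ℝ)/2 < t by linarith)] with s hs
        have hs' : ¬ s < 1/2 := not_lt.mpr (le_of_lt hs)
        simp only [hf_def]
        rw [if_neg hs']
      refine (continuousAt_congr hev).mpr ?_
      exact Real.continuous_sqrt.continuousAt.inv₀
        (ne_of_gt (Real.sqrt_pos.mpr (by linarith)))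
  -- the candidate partial isometry
  set u := cfcₙ f a with hu_def
  have hu : IsSelfAdjoint u := IsSelfAdjoint.cfcₙ
  have huS : u ∈ S n := by
    rw [hu_def]
    exact cfcn_mem (S n) (hSclosed n) ha (mul_mem (star_mem hxS) hxS) f hfc hf0
  -- continuity of auxiliary functions
  have hidc : ContinuousOn (fun t : ℝ => t) (quasispectrum ℝ a) := by fun_prop
  have h_tf : ContinuousOn (fun t => t * f t) (quasispectrum ℝ a) := hidc.mul hfc
  have h_ft : ContinuousOn (fun t => f t * t) (quasispectrum ℝ a) := hfc.mul hidc
  have h_ftf : ContinuousOn (fun t => f t * (t * f t)) (quasispectrum ℝ a) := hfc.mul h_tf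
  have h_s1 : ContinuousOn (fun t => t - t * f t) (quasispectrum ℝ a) := hidc.sub h_tf
  have h_s2 : ContinuousOn (fun t => t - t * f t - f t * t) (quasispectrum ℝ a) := h_s1.sub h_ft
  -- cfcₙ computations
  have m1 : cfcₙ (fun t => t * f t) a = a * u := by
    rw [cfcₙ_mul (fun t : ℝ => t) f a hidc (by simp) hfc hf0, cfcₙ_id' ℝ a]
  have m2 : cfcₙ (fun t => f t * t) a = u * a := by
    rw [cfcₙ_mul f (fun t : ℝ => t) a hfc hf0 hidc (by simp), cfcₙ_id' ℝ a]
  have m3 : cfcₙ (fun t => f t * (t * f t)) a = u * (a * u) := by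
    rw [cfcₙ_mul f (fun t => t * f t) a hfc hf0 h_tf (by simp), m1]
  have m4 : cfcₙ (fun t => t - t * f t) a = a - a * u := by
    rw [cfcₙ_sub (fun t : ℝ => t) (fun t => t * f t) a hidc (by simp) h_tf (by simp),
      cfcₙ_id' ℝ a, m1]
  have m5 : cfcₙ (fun t => t - t * f t - f t * t) a = a - a * u - u * a := by
    rw [cfcₙ_sub (fun t => t - t * f t) (fun t => f t * t) a h_s1 (by simp) h_ft (by simp),
      m4, m2]
  have m6 : cfcₙ (fun t => t - t * f t - f t * t + f t * (t * f t)) a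
      = a - a * u - u * a + u * (a * u) := by
    rw [cfcₙ_add (fun t => t - t * f t - f t * t) (fun t => f t * (t * f t)) a h_s2 (by simp)
      h_ftf (by simp), m5, m3]
  have m7 : cfcₙ (fun t => f t * (f t * (t * f t))) a = u * (u * (a * u)) := by
    rw [cfcₙ_mul f (fun t => f t * (t * f t)) a hfc hf0 h_ftf (by simp), m3]
  -- the key algebraic identity
  have key : u * (u * (star x * (x * u))) = u := by
    have hassoc : star x * (x * u) = a * u := by rw [ha_def, mul_assoc]
    rw [hassoc, ← m7]
    refine (cfcₙ_congr ?_).trans hu_def.symm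
    intro t ht
    rcases hgap t ht with ⟨-, hft⟩ | ⟨ht34, -, hft⟩
    · simp [hft]
    · have ht0 : (0:ℝ) ≤ t := by linarith
      set st := Real.sqrt t with hst_def
      have hst : st * st = t := Real.mul_self_sqrt ht0
      have hstpos : 0 < st := Real.sqrt_pos.mpr (by linarith)
      simp only [hft]
      rw [← hst]
      field_simp
  -- partial isometry property
  have hpi : (x * u) * star (x * u) * (x * u) = x * u := by
    rw [star_mul, hu.star_eq]
    calc x * u * (u * star x) * (x * u)
        = x * (u * (u * (star x * (x * u)))) := by simp only [mul_assoc]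
    _ = x * u := by rw [key]
  -- norm estimate
  have hw_eq : star (x - x * u) * (x - x * u) = a - a * u - u * a + u * (a * u) := by
    rw [ha_def]
    simp only [star_sub, star_mul, hu.star_eq, mul_sub, sub_mul, mul_assoc]
    abel
  have hb : ∀ t ∈ quasispectrum ℝ a,
      ‖t - t * f t - f t * t + f t * (t * f t)‖ ≤ 24 * δ := by
    intro t ht
    rw [Real.norm_eq_abs]
    rcases hgap t ht with ⟨htb, hft⟩ | ⟨ht34, ht1, hft⟩
    · rw [hft]
      simp only [mul_zero, zero_mul, sub_zero, add_zero]
      exact htb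
    · have ht0 : (0:ℝ) ≤ t := by linarith
      set st := Real.sqrt t with hst_def
      have hst : st * st = t := Real.mul_self_sqrt ht0
      have hstpos : 0 < st := Real.sqrt_pos.mpr (by linarith)
      have hexp : t - t * f t - f t * t + f t * (t * f t) = (st - 1)^2 := by
        rw [hft, ← hst]
        field_simp
        ring
      rw [hexp, abs_of_nonneg (sq_nonneg _)]
      have h1 : (t - 1)^2 ≤ (24*δ)^2 := sq_le_sq' (by linarith [(abs_le.mp ht1).1])
        (by linarith [(abs_le.mp ht1).2])
      nlinarith [sq_nonneg ((st - 1) * (st + 1)), sq_nonneg (st - 1), sq_nonneg (st + 1),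
        hst, hstpos.le, hδpos.le]
  have hnw2 : ‖x - x * u‖ * ‖x - x * u‖ ≤ 24 * δ := by
    rw [← CStarRing.norm_star_mul_self, hw_eq, ← m6]
    exact norm_cfcₙ_le hb
  have hnw : ‖x - x * u‖ ≤ ε / 2 := by
    nlinarith [norm_nonneg (x - x * u), sq_nonneg ε, hε.le]
  refine ⟨n, x * u, mul_mem hxS huS, hpi, ?_⟩
  have hsplit : v - x * u = (v - x) + (x - x * u) := by abel
  calc ‖v - x * u‖ = ‖(v - x) + (x - x * u)‖ := by rw [hsplit]
  _ ≤ ‖v - x‖ + ‖x - x * u‖ := norm_add_le _ _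
  _ < ε := by linarith
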